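/- The invariant scheme expression S = [exp(−Δτ(x_τ^d (ln u)_x^d + ((ln u)_x^d)²))·u_i^{n+1} − u_i^n]/Δτ − (4/(h⁺+h⁻)²)·[u_{i+1}^n (u_{i+1}^n/u_{i-1}^n)^{−h⁺/(h⁺+h⁻)} + u_{i-1}^n (u_{i+1}^n/u_{i-1}^n)^{h⁻/(h⁺+h⁻)} − 2u_i^n] transforms under the 5-parameter group action on the stencil as S̃ = e^{ε₃ − ε₅x_i^n − ε₅²τ^n − 2ε₄}·S; in particular S = 0 implies S̃ = 0. -/

import Mathlib

/-!
Only differences of the `x`'s enter `S`, so the translations `ε₁, ε₂` drop out, and the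
dilation multiplies `Δτ` by `e^{2ε₄}` and `h±` by `e^{ε₄}`. Write `w = e^{ε₃ − ε₅x_i^n − ε₅²τ^n}`
for the multiplier at the centre of the stencil. Under the Galilean boost the discrete
logarithmic derivative `L = (ln u)_x^d` becomes `(L − ε₅)/e^{ε₄}`, and the exponential of the
time difference then produces exactly the factor `e^{ε₅(x_i^{n+1} − x_i^n) + ε₅²Δτ}` that turns
the multiplier at `(x_i^{n+1}, τ^{n+1})` into `w`. In the space difference the ratio
`u_{i+1}/u_{i−1}` acquires `e^{−ε₅(h⁺+h⁻)}`, whose powers `−h⁺/(h⁺+h⁻)` and `h⁻/(h⁺+h⁻)`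
likewise turn the multipliers at `x_{i±1}` into `w`. Both parts of `S` are therefore multiplied
by `w e^{−2ε₄}`.
-/

open Real

/-- The invariant scheme expression `S` on the stencil
`(Δτ; x_{i−1}^n, x_i^n, x_{i+1}^n, x_i^{n+1}; u_{i−1}^n, u_i^n, u_{i+1}^n, u_i^{n+1})`,
with `h⁺ = x_{i+1}^n − x_i^n`, `h⁻ = x_i^n − x_{i−1}^n`,
`x_τ^d = (x_i^{n+1} − x_i^n)/Δτ` and
`(ln u)_x^d = (ln u_{i+1}^n − ln u_{i−1}^n)/(h⁺+h⁻)`. -/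
noncomputable def Sexpr (Δτ xm x0 xp x1 um u0 up u1 : ℝ) : ℝ :=
  let hp := xp - x0
  let hm := x0 - xm
  let xτ := (x1 - x0) / Δτ
  let L := (Real.log up - Real.log um) / (hp + hm)
  (exp (-Δτ * (xτ * L + L^2)) * u1 - u0) / Δτ
    - 4 * (up * (up/um) ^ (-(hp/(hp+hm)))
        + um * (up/um) ^ (hm/(hp+hm)) - 2*u0) / (hp + hm)^2

noncomputable def timeTerm (Δτ X L u0 u1 : ℝ) : ℝ :=
  (exp (-Δτ * (X / Δτ * L + L ^ 2)) * u1 - u0) / Δτ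

noncomputable def spaceTerm (hp hm um u0 up : ℝ) : ℝ :=
  4 * (up * (up / um) ^ (-(hp / (hp + hm))) + um * (up / um) ^ (hm / (hp + hm)) - 2 * u0)
    / (hp + hm) ^ 2

theorem Sexpr_eq_timeTerm_sub_spaceTerm (Δτ xm x0 xp x1 um u0 up u1 : ℝ) :
    Sexpr Δτ xm x0 xp x1 um u0 up u1 =
      timeTerm Δτ (x1 - x0) ((log up - log um) / (xp - x0 + (x0 - xm))) u0 u1
        - spaceTerm (xp - x0) (x0 - xm) um u0 up :=
  rfl

section BoostScale

variable {c s w : ℝ}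

theorem timeTerm_boost_scale (hc : c ≠ 0) {Δ : ℝ} (hΔ : Δ ≠ 0) (X L u0 u1 : ℝ) :
    timeTerm (c ^ 2 * Δ) (c * (X + 2 * s * Δ)) ((L - s) / c) (w * u0)
        (w * exp (-s * X - s ^ 2 * Δ) * u1)
      = w / c ^ 2 * timeTerm Δ X L u0 u1 := by
  have hexponent : -(c ^ 2 * Δ) * (c * (X + 2 * s * Δ) / (c ^ 2 * Δ) * ((L - s) / c)
        + ((L - s) / c) ^ 2)
      = -Δ * (X / Δ * L + L ^ 2) + (s * X + s ^ 2 * Δ) := by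
    field_simp; ring
  have hcancel : exp (s * X + s ^ 2 * Δ) * exp (-s * X - s ^ 2 * Δ) = 1 := by
    rw [← exp_add]; ring_nf; exact exp_zero
  unfold timeTerm
  rw [hexponent, exp_add]
  generalize exp (s * X + s ^ 2 * Δ) = P at hcancel ⊢
  generalize exp (-s * X - s ^ 2 * Δ) = Q at hcancel ⊢
  generalize exp (-Δ * (X / Δ * L + L ^ 2)) = E
  field_simp
  linear_combination (w * E * u1) * hcancel

theorem spaceTerm_boost_scale (hc : c ≠ 0) (hw : w ≠ 0) {hp hm : ℝ} (hH : hp + hm ≠ 0)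
    {um up : ℝ} (hr : 0 ≤ up / um) (u0 : ℝ) :
    spaceTerm (c * hp) (c * hm) (w * exp (s * hm) * um) (w * u0) (w * exp (-s * hp) * up)
      = w / c ^ 2 * spaceTerm hp hm um u0 up := by
  have hratio : w * exp (-s * hp) * up / (w * exp (s * hm) * um)
      = exp (-s * (hp + hm)) * (up / um) := by
    rw [mul_div_mul_comm, mul_div_mul_left _ _ hw, ← exp_sub]; ring_nf
  have hpow (y : ℝ) : (exp (-s * (hp + hm)) * (up / um)) ^ (y / (hp + hm))
      = exp (-s * y) * (up / um) ^ (y / (hp + hm)) := by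
    rw [mul_rpow (exp_pos _).le hr, ← exp_mul]; congr 2; field_simp
  have hfrac (y : ℝ) : c * y / (c * hp + c * hm) = y / (hp + hm) := by
    rw [← mul_add, mul_div_mul_left _ _ hc]
  unfold spaceTerm
  rw [hratio, hfrac, hfrac, ← neg_div, hpow, hpow, ← mul_add]
  simp only [neg_mul, mul_neg, neg_neg, exp_neg]
  field_simp

theorem log_sub_log_boost (hw : w ≠ 0) {um up : ℝ} (hum : um ≠ 0) (hup : up ≠ 0) (hp hm : ℝ) :
    log (w * exp (-s * hp) * up) - log (w * exp (s * hm) * um)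
      = log up - log um - s * (hp + hm) := by
  simp only [log_mul (mul_ne_zero hw (exp_ne_zero _)) hup,
    log_mul (mul_ne_zero hw (exp_ne_zero _)) hum, log_mul hw (exp_ne_zero _), log_exp]
  ring

theorem Sexpr_boost_scale (hc : c ≠ 0) (hw : w ≠ 0) (a : ℝ) {Δ : ℝ} (hΔ : Δ ≠ 0)
    {xm x0 xp : ℝ} (hx : xm ≠ xp) (x1 : ℝ) {um up : ℝ} (hum : 0 < um) (hup : 0 < up)
    (u0 u1 : ℝ) :
    Sexpr (c ^ 2 * Δ) (c * (xm + a)) (c * (x0 + a)) (c * (xp + a)) (c * (x1 + a + 2 * s * Δ))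
        (w * exp (s * (x0 - xm)) * um) (w * u0) (w * exp (-s * (xp - x0)) * up)
        (w * exp (-s * (x1 - x0) - s ^ 2 * Δ) * u1)
      = w / c ^ 2 * Sexpr Δ xm x0 xp x1 um u0 up u1 := by
  have hH : xp - x0 + (x0 - xm) ≠ 0 := by
    rw [sub_add_sub_cancel]; exact sub_ne_zero.mpr hx.symm
  have hslope : (log (w * exp (-s * (xp - x0)) * up) - log (w * exp (s * (x0 - xm)) * um))
        / (c * (xp - x0) + c * (x0 - xm))
      = ((log up - log um) / (xp - x0 + (x0 - xm)) - s) / c := by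
    rw [log_sub_log_boost hw hum.ne' hup.ne', ← mul_add]
    field_simp
  have hdiff (y z : ℝ) : c * (y + a) - c * (z + a) = c * (y - z) := by ring
  rw [Sexpr_eq_timeTerm_sub_spaceTerm, Sexpr_eq_timeTerm_sub_spaceTerm, mul_sub (w / c ^ 2),
    show c * (x1 + a + 2 * s * Δ) - c * (x0 + a) = c * (x1 - x0 + 2 * s * Δ) by ring,
    hdiff, hdiff, hslope, timeTerm_boost_scale hc hΔ,
    spaceTerm_boost_scale hc hw hH (div_pos hup hum).le]

end BoostScale

theorem invariant_scheme_transforms_general (ε₁ ε₂ ε₃ ε₄ ε₅ : ℝ)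
    (τn τn1 xm x0 xp x1 um u0 up u1 : ℝ)
    (hτ : τn < τn1) (hxm : xm < x0) (hxp : x0 < xp)
    (hum : 0 < um) (hup : 0 < up) :
    Sexpr (exp (2*ε₄)*(τn1 + ε₁) - exp (2*ε₄)*(τn + ε₁))
        (exp ε₄ * (xm + ε₂ + 2*ε₅*τn))
        (exp ε₄ * (x0 + ε₂ + 2*ε₅*τn))
        (exp ε₄ * (xp + ε₂ + 2*ε₅*τn))
        (exp ε₄ * (x1 + ε₂ + 2*ε₅*τn1))
        (exp (ε₃ - ε₅*xm - ε₅^2*τn) * um)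
        (exp (ε₃ - ε₅*x0 - ε₅^2*τn) * u0)
        (exp (ε₃ - ε₅*xp - ε₅^2*τn) * up)
        (exp (ε₃ - ε₅*x1 - ε₅^2*τn1) * u1)
      = exp (ε₃ - ε₅*x0 - ε₅^2*τn - 2*ε₄)
        * Sexpr (τn1 - τn) xm x0 xp x1 um u0 up u1 := by
  have hexp2 : exp (2 * ε₄) = exp ε₄ ^ 2 := by rw [sq, ← exp_add, two_mul]
  calc _ = Sexpr (exp ε₄ ^ 2 * (τn1 - τn)) (exp ε₄ * (xm + (ε₂ + 2 * ε₅ * τn)))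
          (exp ε₄ * (x0 + (ε₂ + 2 * ε₅ * τn))) (exp ε₄ * (xp + (ε₂ + 2 * ε₅ * τn)))
          (exp ε₄ * (x1 + (ε₂ + 2 * ε₅ * τn) + 2 * ε₅ * (τn1 - τn)))
          (exp (ε₃ - ε₅ * x0 - ε₅ ^ 2 * τn) * exp (ε₅ * (x0 - xm)) * um)
          (exp (ε₃ - ε₅ * x0 - ε₅ ^ 2 * τn) * u0)
          (exp (ε₃ - ε₅ * x0 - ε₅ ^ 2 * τn) * exp (-ε₅ * (xp - x0)) * up)
          (exp (ε₃ - ε₅ * x0 - ε₅ ^ 2 * τn) * exp (-ε₅ * (x1 - x0) - ε₅ ^ 2 * (τn1 - τn))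
            * u1) := by
        congr 1
        · rw [hexp2]; ring
        all_goals first | ring1 | (rw [← exp_add]; ring_nf)
    _ = exp (ε₃ - ε₅ * x0 - ε₅ ^ 2 * τn) / exp ε₄ ^ 2
          * Sexpr (τn1 - τn) xm x0 xp x1 um u0 up u1 :=
        Sexpr_boost_scale (exp_ne_zero _) (exp_ne_zero _) _ (sub_pos.mpr hτ).ne'
          (hxm.trans hxp).ne _ hum hup _ _
    _ = _ := by rw [exp_sub (ε₃ - ε₅ * x0 - ε₅ ^ 2 * τn), hexp2]

/-- The invariant scheme `S` for the heat equation transforms under the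
5-parameter group action on the stencil as
`S̃ = e^{ε₃ − ε₅x_i^n − ε₅²τ^n − 2ε₄} S`; in particular `S = 0` implies `S̃ = 0`. -/
theorem invariant_scheme_transforms (ε₁ ε₂ ε₃ ε₄ ε₅ : ℝ)
    (τn τn1 xm x0 xp x1 um u0 up u1 : ℝ)
    (hτ : τn < τn1) (hxm : xm < x0) (hxp : x0 < xp)
    (hum : 0 < um) (hu0 : 0 < u0) (hup : 0 < up) (hu1 : 0 < u1) :
    Sexpr (exp (2*ε₄)*(τn1 + ε₁) - exp (2*ε₄)*(τn + ε₁))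
        (exp ε₄ * (xm + ε₂ + 2*ε₅*τn))
        (exp ε₄ * (x0 + ε₂ + 2*ε₅*τn))
        (exp ε₄ * (xp + ε₂ + 2*ε₅*τn))
        (exp ε₄ * (x1 + ε₂ + 2*ε₅*τn1))
        (exp (ε₃ - ε₅*xm - ε₅^2*τn) * um)
        (exp (ε₃ - ε₅*x0 - ε₅^2*τn) * u0)
        (exp (ε₃ - ε₅*xp - ε₅^2*τn) * up)
        (exp (ε₃ - ε₅*x1 - ε₅^2*τn1) * u1)
      = exp (ε₃ - ε₅*x0 - ε₅^2*τn - 2*ε₄)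
        * Sexpr (τn1 - τn) xm x0 xp x1 um u0 up u1 :=
  invariant_scheme_transforms_general ε₁ ε₂ ε₃ ε₄ ε₅ τn τn1 xm x0 xp x1 um u0 up u1 hτ hxm hxp hum
    hup
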